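/- Let $\{f_t\}$ be a convolution family of densities, $M=\sum_{i=1}^n m_i$ with $m_i>0$, and $\nu$ a probability measure with $0<f_M(z)<\infty$ $\nu$-a.e. Define $\Theta_t(x)=\int \frac{f_{M(1-t)}(z-x)}{f_M(z)}\nu(dz)$ and the $n$-dimensional transition kernels $P_{s,t}(\mathbf{x}, d\mathbf{y}) = \frac{\Theta_t(\sum_i y_i)}{\Theta_s(\sum_i x_i)}\prod_i f_{(t-s)m_i}(y_i-x_i)dy_i$. Then the induced law of the sum $r = \sum_i y_i$ under $P_{s,t}(\mathbf{x},\cdot)$ is $\frac{\Theta_t(r)}{\Theta_s(\sum_i x_i)} f_{(t-s)M}(r - \sum_i x_i)\,dr$; i.e., the coordinate-sum of a GLP has the transition density of a one-dimensional Lévy random bridge with generating law $\nu$ and time scale $M$. -/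

import Mathlib

open MeasureTheory ENNReal

set_option maxHeartbeats 1000000

/-- Pushing a density that factors through a map. -/
lemma aux_map_withDensity_comp {α β : Type*} [MeasurableSpace α] [MeasurableSpace β]
    (μ : Measure α) {φ : α → β} (hφ : Measurable φ) {g : β → ℝ≥0∞} (hg : Measurable g) :
    Measure.map φ (μ.withDensity (fun a => g (φ a))) = (Measure.map φ μ).withDensity g := by
  ext A hA
  rw [Measure.map_apply hφ hA, withDensity_apply _ (hφ hA), withDensity_apply _ hA,
    setLIntegral_map hA hg hφ]

/-- Pushforward of a product of densities under addition is the convolution density. -/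
lemma aux_map_add_prod {h k : ℝ → ℝ≥0∞} (hh : Measurable h) (hk : Measurable k) :
    Measure.map (fun p : ℝ × ℝ => p.1 + p.2)
      ((volume.withDensity h).prod (volume.withDensity k)) =
    volume.withDensity (fun r => ∫⁻ y, h (r - y) * k y) := by
  ext A hA
  have hadd : Measurable (fun p : ℝ × ℝ => p.1 + p.2) := measurable_fst.add measurable_snd
  have hmA : MeasurableSet ((fun p : ℝ × ℝ => p.1 + p.2) ⁻¹' A) := hadd hA
  set I : ℝ → ℝ≥0∞ := A.indicator (fun _ => 1) with hI
  have hImeas : Measurable I := measurable_const.indicator hA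
  have hkI : ∀ a : ℝ, Measurable (fun b => k b * I (a + b)) := fun a =>
    hk.mul (hImeas.comp (measurable_const.add measurable_id))
  have hsec : ∀ a : ℝ, (volume.withDensity k) (Prod.mk a ⁻¹' ((fun p : ℝ × ℝ => p.1 + p.2) ⁻¹' A))
      = ∫⁻ b, k b * I (a + b) := by
    intro a
    have hpre : MeasurableSet ((fun b : ℝ => a + b) ⁻¹' A) := (measurable_const.add measurable_id) hA
    have : Prod.mk a ⁻¹' ((fun p : ℝ × ℝ => p.1 + p.2) ⁻¹' A) = (fun b : ℝ => a + b) ⁻¹' A := rfl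
    rw [this, withDensity_apply _ hpre, ← lintegral_indicator hpre]
    refine lintegral_congr fun b => ?_
    by_cases hb : a + b ∈ A <;>
      simp [Set.indicator, hb, hI]
  rw [Measure.map_apply hadd hA, Measure.prod_apply hmA]
  simp_rw [hsec]
  have hinner : Measurable fun a : ℝ => ∫⁻ b, k b * I (a + b) := by
    apply Measurable.lintegral_prod_right'
      (f := fun p : ℝ × ℝ => k p.2 * I (p.1 + p.2))
    exact (hk.comp measurable_snd).mul (hImeas.comp hadd)
  rw [lintegral_withDensity_eq_lintegral_mul volume hh hinner]
  simp only [Pi.mul_apply]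
  have h1 : ∀ a : ℝ, h a * ∫⁻ b, k b * I (a + b) = ∫⁻ b, h a * (k b * I (a + b)) := fun a =>
    (lintegral_const_mul (h a) (hkI a)).symm
  simp_rw [h1]
  rw [lintegral_lintegral_swap]
  · have h2 : ∀ b : ℝ, ∫⁻ a, h a * (k b * I (a + b)) = ∫⁻ r, h (r - b) * (k b * I r) := by
      intro b
      rw [← lintegral_add_right_eq_self (fun r => h (r - b) * (k b * I r)) b]
      simp
    simp_rw [h2]
    rw [lintegral_lintegral_swap]
    · have h3 : ∀ r : ℝ, ∫⁻ b, h (r - b) * (k b * I r) = I r * ∫⁻ b, h (r - b) * k b := by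
        intro r
        have hm : Measurable fun y : ℝ => h (r - y) * k y :=
          (hh.comp (measurable_const.sub measurable_id)).mul hk
        rw [← lintegral_const_mul (I r) hm]
        refine lintegral_congr fun y => by ring
      simp_rw [h3]
      rw [withDensity_apply _ hA, ← lintegral_indicator hA]
      refine lintegral_congr fun r => ?_
      by_cases hr : r ∈ A <;> simp [Set.indicator, hr, hI]
    · apply Measurable.aemeasurable
      exact ((hh.comp (measurable_snd.sub measurable_fst)).mul
        ((hk.comp measurable_fst).mul (hImeas.comp measurable_snd)))
  · apply Measurable.aemeasurable
    exact (hh.comp measurable_fst).mul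
      ((hk.comp measurable_snd).mul (hImeas.comp hadd))

/-- Product measure with a product density. -/
lemma aux_prod_withDensity {α β : Type*} [MeasurableSpace α] [MeasurableSpace β]
    (μ : Measure α) (ν : Measure β) [SigmaFinite μ] [SigmaFinite ν]
    {h : α → ℝ} {k : β → ℝ} (hh : Measurable h) (hk : Measurable k) :
    (μ.prod ν).withDensity (fun p => ENNReal.ofReal (h p.1) * ENNReal.ofReal (k p.2)) =
      (μ.withDensity fun a => ENNReal.ofReal (h a)).prod
        (ν.withDensity fun b => ENNReal.ofReal (k b)) := by
  refine (Measure.prod_eq (μ := μ.withDensity fun a => ENNReal.ofReal (h a))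
    (ν := ν.withDensity fun b => ENNReal.ofReal (k b)) fun s t hs ht => ?_).symm
  rw [withDensity_apply _ (hs.prod ht), ← Measure.prod_restrict,
    lintegral_prod_mul (hh.ennreal_ofReal.aemeasurable) (hk.ennreal_ofReal.aemeasurable),
    withDensity_apply _ hs, withDensity_apply _ ht]

/-- A.e. convolution identity at the `lintegral` level. -/
lemma aux_conv_ae (f : ℝ → ℝ → ℝ) (s t : ℝ) (hs : 0 < s) (ht : 0 < t)
    (hf_meas : ∀ u, 0 < u → Measurable (f u))
    (hf_nonneg : ∀ u x, 0 < u → 0 ≤ f u x)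
    (hf_prob : ∀ u, 0 < u → ∫ x, f u x = 1)
    (hconv : ∀ s t, 0 < s → 0 < t → ∀ x, f (s + t) x = ∫ y, f s (x - y) * f t y) :
    ∀ᵐ x : ℝ, ENNReal.ofReal (f (s + t) x)
      = ∫⁻ y, ENNReal.ofReal (f s (x - y)) * ENNReal.ofReal (f t y) := by
  have hint : ∀ u, 0 < u → Integrable (f u) := by
    intro u hu
    by_contra h
    have h1 := hf_prob u hu
    rw [integral_undef h] at h1
    exact one_ne_zero h1.symm
  have hl : ∀ u, 0 < u → ∫⁻ x, ENNReal.ofReal (f u x) = 1 := by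
    intro u hu
    rw [← ofReal_integral_eq_lintegral_ofReal (hint u hu)
      (Filter.Eventually.of_forall fun x => hf_nonneg u x hu), hf_prob u hu, ofReal_one]
  set F := fun x : ℝ => ∫⁻ y, ENNReal.ofReal (f s (x - y)) * ENNReal.ofReal (f t y) with hF
  have hFmeas : Measurable F := by
    apply Measurable.lintegral_prod_right'
      (f := fun p : ℝ × ℝ => ENNReal.ofReal (f s (p.1 - p.2)) * ENNReal.ofReal (f t p.2))
    exact ((hf_meas s hs).comp (measurable_fst.sub measurable_snd)).ennreal_ofReal.mul
      ((hf_meas t ht).comp measurable_snd).ennreal_ofReal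
  have hFint : ∫⁻ x, F x = 1 := by
    rw [hF]
    have hunc : Measurable (Function.uncurry fun (x y : ℝ) =>
        ENNReal.ofReal (f s (x - y)) * ENNReal.ofReal (f t y)) :=
      ((hf_meas s hs).comp (measurable_fst.sub measurable_snd)).ennreal_ofReal.mul
        ((hf_meas t ht).comp measurable_snd).ennreal_ofReal
    rw [lintegral_lintegral_swap hunc.aemeasurable]
    have hy : ∀ y : ℝ, ∫⁻ x, ENNReal.ofReal (f s (x - y)) * ENNReal.ofReal (f t y)
        = ENNReal.ofReal (f t y) := by
      intro y
      have hm : Measurable fun x : ℝ => ENNReal.ofReal (f s (x - y)) :=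
        ((hf_meas s hs).comp (measurable_id.sub measurable_const)).ennreal_ofReal
      rw [lintegral_mul_const _ hm,
        lintegral_sub_right_eq_self (fun x => ENNReal.ofReal (f s x)) y, hl s hs, one_mul]
    simp_rw [hy]
    exact hl t ht
  filter_upwards [ae_lt_top hFmeas (by rw [hFint]; exact one_ne_top)] with x hx
  have hnn : ∀ y, 0 ≤ f s (x - y) * f t y := fun y =>
    mul_nonneg (hf_nonneg s _ hs) (hf_nonneg t _ ht)
  have hmg : Measurable fun y => f s (x - y) * f t y :=
    ((hf_meas s hs).comp (measurable_const.sub measurable_id)).mul (hf_meas t ht)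
  have heq : ∫⁻ y, ENNReal.ofReal (f s (x - y) * f t y) = F x :=
    lintegral_congr fun y => ENNReal.ofReal_mul (hf_nonneg s _ hs)
  have hintg : Integrable (fun y => f s (x - y) * f t y) :=
    ⟨hmg.aestronglyMeasurable,
      (hasFiniteIntegral_iff_ofReal (Filter.Eventually.of_forall hnn)).2 (heq ▸ hx)⟩
  rw [hconv s t hs ht x,
    ofReal_integral_eq_lintegral_ofReal hintg (Filter.Eventually.of_forall hnn), heq]

/-- Main induction: pushing the product of one-dimensional densities forward
under the coordinate sum yields the convolved density. -/
lemma aux_key (f : ℝ → ℝ → ℝ)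
    (hf_meas : ∀ u, 0 < u → Measurable (f u))
    (hf_nonneg : ∀ u x, 0 < u → 0 ≤ f u x)
    (hf_prob : ∀ u, 0 < u → ∫ x, f u x = 1)
    (hconv : ∀ s t, 0 < s → 0 < t → ∀ x, f (s + t) x = ∫ y, f s (x - y) * f t y) :
    ∀ (n : ℕ), 0 < n → ∀ (m : Fin n → ℝ), (∀ i, 0 < m i) → ∀ (x : Fin n → ℝ),
      Measure.map (fun y : Fin n → ℝ => ∑ i, y i)
        (volume.withDensity (fun y => ∏ i, ENNReal.ofReal (f (m i) (y i - x i)))) =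
      volume.withDensity (fun r => ENNReal.ofReal (f (∑ i, m i) (r - ∑ i, x i))) := by
  intro n
  induction n with
  | zero => exact fun h => absurd h (lt_irrefl 0)
  | succ n ih =>
    intro _ m hm x
    rcases Nat.eq_zero_or_pos n with hn0 | hnpos
    · subst hn0
      have hsum : (fun y : Fin 1 → ℝ => ∑ i, y i) = fun y => y 0 := by
        funext y; simp
      have hd : (fun y : Fin 1 → ℝ => ∏ i, ENNReal.ofReal (f (m i) (y i - x i)))
          = fun y => ENNReal.ofReal (f (m 0) (y 0 - x 0)) := by
        funext y; simp
      have hg : Measurable fun r : ℝ => ENNReal.ofReal (f (m 0) (r - x 0)) :=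
        ((hf_meas _ (hm 0)).comp (measurable_id.sub_const _)).ennreal_ofReal
      rw [hsum, hd, aux_map_withDensity_comp volume (measurable_pi_apply 0) hg]
      have hmap : Measure.map (fun y : Fin 1 → ℝ => y 0) volume = volume := by
        have := (volume_preserving_funUnique (Fin 1) ℝ).map_eq
        convert this using 2 <;> rfl
      rw [hmap]
      congr 1
      funext r
      simp
    · -- inductive step, n ≥ 1
      have hne : Nonempty (Fin n) := Fin.pos_iff_nonempty.mp hnpos
      set M : ℝ := ∑ j : Fin n, m (Fin.succ j) with hMdef
      set X : ℝ := ∑ j : Fin n, x (Fin.succ j) with hXdef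
      have hM : 0 < M := Finset.sum_pos (fun j _ => hm _) Finset.univ_nonempty
      set e := MeasurableEquiv.piFinSuccAbove (fun _ : Fin (n+1) => ℝ) 0 with hedef
      have he : ∀ y : Fin (n+1) → ℝ, e y = (y 0, fun j : Fin n => y (Fin.succ j)) := by
        intro y
        simp only [hedef, MeasurableEquiv.piFinSuccAbove, Fin.removeNth, Fin.zero_succAbove]
        rfl
      -- the two factor densities
      set h₀ : ℝ → ℝ≥0∞ := fun a => ENNReal.ofReal (f (m 0) (a - x 0)) with hh₀def
      set k₀ : (Fin n → ℝ) → ℝ≥0∞ :=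
        fun b => ∏ j : Fin n, ENNReal.ofReal (f (m (Fin.succ j)) (b j - x (Fin.succ j)))
        with hk₀def
      set k₀r : (Fin n → ℝ) → ℝ :=
        fun b => ∏ j : Fin n, f (m (Fin.succ j)) (b j - x (Fin.succ j)) with hk₀rdef
      have hk₀eq : k₀ = fun b => ENNReal.ofReal (k₀r b) := by
        funext b
        rw [hk₀def, hk₀rdef, ENNReal.ofReal_prod_of_nonneg
          (fun j _ => hf_nonneg _ _ (hm _))]
      have hh₀meas : Measurable h₀ :=
        ((hf_meas _ (hm 0)).comp (measurable_id.sub_const _)).ennreal_ofReal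
      have hk₀rmeas : Measurable k₀r :=
        Finset.measurable_prod _ fun j _ =>
          (hf_meas _ (hm _)).comp ((measurable_pi_apply j).sub_const _)
      have hk₀meas : Measurable k₀ := by
        rw [hk₀eq]; exact hk₀rmeas.ennreal_ofReal
      have hsumn : Measurable fun b : Fin n → ℝ => ∑ j, b j :=
        Finset.measurable_sum _ fun j _ => measurable_pi_apply j
      -- rewrite the density and the sum map through e
      have hD : (fun y : Fin (n+1) → ℝ => ∏ i, ENNReal.ofReal (f (m i) (y i - x i)))
          = fun y => (fun p : ℝ × (Fin n → ℝ) => h₀ p.1 * k₀ p.2) (e y) := by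
        funext y
        rw [he y, Fin.prod_univ_succ]
      have hS : (fun y : Fin (n+1) → ℝ => ∑ i, y i)
          = (fun p : ℝ × (Fin n → ℝ) => p.1 + ∑ j, p.2 j) ∘ ⇑e := by
        funext y
        simp only [Function.comp_apply, he y, Fin.sum_univ_succ]
      have hD'meas : Measurable fun p : ℝ × (Fin n → ℝ) => h₀ p.1 * k₀ p.2 :=
        (hh₀meas.comp measurable_fst).mul (hk₀meas.comp measurable_snd)
      have hgmeas : Measurable fun p : ℝ × (Fin n → ℝ) => p.1 + ∑ j, p.2 j :=
        measurable_fst.add (hsumn.comp measurable_snd)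
      rw [hD, hS, ← Measure.map_map hgmeas e.measurable,
        aux_map_withDensity_comp volume e.measurable hD'meas]
      have hevol : Measure.map (⇑e) volume = (volume : Measure ℝ).prod volume := by
        have := (measurePreserving_piFinSuccAbove (α := fun _ : Fin (n+1) => ℝ)
          (fun _ => volume) 0).map_eq
        simpa [← volume_pi, hedef] using this
      rw [hevol]
      -- split the density over the product
      have hsplit : (((volume : Measure ℝ).prod (volume : Measure (Fin n → ℝ))).withDensity
            (fun p => h₀ p.1 * k₀ p.2))
          = (volume.withDensity h₀).prod (volume.withDensity k₀) := by
        rw [hk₀eq, hh₀def]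
        exact aux_prod_withDensity (h := fun a => f (m 0) (a - x 0)) (k := k₀r)
          volume volume
          ((hf_meas _ (hm 0)).comp (measurable_id.sub_const _)) hk₀rmeas
      rw [hsplit]
      -- push forward along Prod.map id sum, then addition
      have hdec : (fun p : ℝ × (Fin n → ℝ) => p.1 + ∑ j, p.2 j)
          = (fun q : ℝ × ℝ => q.1 + q.2) ∘ Prod.map id (fun b : Fin n → ℝ => ∑ j, b j) := by
        funext p; rfl
      set k1 : ℝ → ℝ≥0∞ := fun r => ENNReal.ofReal (f M (r - X)) with hk1def
      have hk1meas : Measurable k1 :=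
        ((hf_meas _ hM).comp (measurable_id.sub_const _)).ennreal_ofReal
      have hIH : Measure.map (fun b : Fin n → ℝ => ∑ j, b j) (volume.withDensity k₀)
          = volume.withDensity k1 :=
        ih hnpos (fun j => m (Fin.succ j)) (fun j => hm _) (fun j => x (Fin.succ j))
      rw [hdec, ← Measure.map_map (g := fun q : ℝ × ℝ => q.1 + q.2) (measurable_fst.add measurable_snd)
        (measurable_id.prodMap hsumn),
        ← Measure.map_prod_map _ _ measurable_id hsumn, Measure.map_id, hIH,
        aux_map_add_prod hh₀meas hk1meas]
      -- identify the convolution with the density of f at time m 0 + M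
      have hconv_ae := aux_conv_ae f (m 0) M (hm 0) hM hf_meas hf_nonneg hf_prob hconv
      have hstep : ∀ r : ℝ, ∫⁻ y, h₀ (r - y) * k1 y
          = ∫⁻ u, ENNReal.ofReal (f (m 0) ((r - (x 0 + X)) - u)) * ENNReal.ofReal (f M u) := by
        intro r
        rw [← lintegral_sub_right_eq_self
          (fun u => ENNReal.ofReal (f (m 0) ((r - (x 0 + X)) - u)) * ENNReal.ofReal (f M u)) X]
        refine lintegral_congr fun y => ?_
        have harg : r - (x 0 + X) - (y - X) = r - y - x 0 := by ring
        rw [harg, hh₀def, hk1def]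
      have hae : (fun r : ℝ => ∫⁻ y, h₀ (r - y) * k1 y)
          =ᵐ[volume] fun r => ENNReal.ofReal (f (m 0 + M) (r - (x 0 + X))) := by
        have hq := (measurePreserving_sub_right (volume : Measure ℝ)
          (x 0 + X)).quasiMeasurePreserving
        have hconv_ae' : (fun z : ℝ => ENNReal.ofReal (f (m 0 + M) z)) =ᵐ[volume]
            (fun z => ∫⁻ u, ENNReal.ofReal (f (m 0) (z - u)) * ENNReal.ofReal (f M u)) :=
          hconv_ae
        have := hq.ae_eq_comp hconv_ae'.symm
        filter_upwards [this] with r hr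
        rw [hstep r]
        exact hr.trans rfl
      rw [withDensity_congr_ae hae]
      congr 1
      funext r
      rw [Fin.sum_univ_succ m, Fin.sum_univ_succ x]

/-- Proposition 3.4 (equation (24)): under the GLP transition kernel
`P_{s,t}(x, dy) = (Θ_t(Σyᵢ)/Θ_s(Σxᵢ)) ∏ f_{(t-s)mᵢ}(yᵢ - xᵢ) dy`, the law of the
coordinate sum `r = Σ yᵢ` is
`(Θ_t(r)/Θ_s(Σxᵢ)) f_{(t-s)M}(r - Σxᵢ) dr`, i.e. the coordinate-sum process of
a GLP has the transition density of a one-dimensional Lévy random bridge. -/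
theorem glp_sum_is_lrb
    (n : ℕ) (hn : 0 < n) (m : Fin n → ℝ) (hm : ∀ i, 0 < m i)
    (f : ℝ → ℝ → ℝ) (ν : Measure ℝ) [IsProbabilityMeasure ν]
    (hf_meas : ∀ t, 0 < t → Measurable (f t))
    (hf_nonneg : ∀ t x, 0 < t → 0 ≤ f t x)
    (hf_prob : ∀ t, 0 < t → ∫ x, f t x = 1)
    (hconv : ∀ s t, 0 < s → 0 < t → ∀ x, f (s + t) x = ∫ y, f s (x - y) * f t y)
    (hfM : ∀ᵐ z ∂ν, 0 < f (∑ i, m i) z)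
    (Θ : ℝ → ℝ → ℝ)
    (hΘ : ∀ t x, 0 ≤ t → t < 1 →
      Θ t x = ∫ z, f ((∑ i, m i) * (1 - t)) (z - x) / f (∑ i, m i) z ∂ν)
    (hΘpos : ∀ t x, 0 ≤ t → t < 1 → 0 < Θ t x)
    (P : ℝ → ℝ → (Fin n → ℝ) → Measure (Fin n → ℝ))
    (hP : ∀ s t (x : Fin n → ℝ), 0 ≤ s → s < t → t < 1 →
      P s t x = volume.withDensity (fun y : Fin n → ℝ =>
        ENNReal.ofReal (Θ t (∑ i, y i) / Θ s (∑ i, x i) *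
          ∏ i, f ((t - s) * m i) (y i - x i)))) :
    ∀ s t (x : Fin n → ℝ), 0 ≤ s → s < t → t < 1 →
      Measure.map (fun y : Fin n → ℝ => ∑ i, y i) (P s t x) =
        volume.withDensity (fun r : ℝ =>
          ENNReal.ofReal (Θ t r / Θ s (∑ i, x i) *
            f ((t - s) * ∑ i, m i) (r - ∑ i, x i))) := by
  intro s t x hs hst ht1
  have ht0 : 0 ≤ t := hs.trans hst.le
  have hts : 0 < t - s := sub_pos.mpr hst
  have hnempty : Nonempty (Fin n) := Fin.pos_iff_nonempty.mp hn
  have hMpos : 0 < ∑ i, m i := Finset.sum_pos (fun i _ => hm i) Finset.univ_nonempty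
  have hCpos : 0 < Θ s (∑ i, x i) := hΘpos s _ hs (hst.trans ht1)
  -- measurability of Θ t
  have hMt : 0 < (∑ i, m i) * (1 - t) := mul_pos hMpos (by linarith)
  have hΘt_meas : Measurable fun r : ℝ => Θ t r := by
    have hint_meas : Measurable fun p : ℝ × ℝ =>
        f ((∑ i, m i) * (1 - t)) (p.2 - p.1) / f (∑ i, m i) p.2 :=
      ((hf_meas _ hMt).comp (measurable_snd.sub measurable_fst)).div
        ((hf_meas _ hMpos).comp measurable_snd)
    have hsm := hint_meas.stronglyMeasurable.integral_prod_right' (ν := ν)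
    have heq : (fun r : ℝ => Θ t r)
        = fun r => ∫ z, f ((∑ i, m i) * (1 - t)) (z - r) / f (∑ i, m i) z ∂ν :=
      funext fun r => hΘ t r ht0 ht1
    rw [heq]
    exact hsm.measurable
  set G : ℝ → ℝ≥0∞ := fun r => ENNReal.ofReal (Θ t r / Θ s (∑ i, x i)) with hGdef
  have hG : Measurable G := (hΘt_meas.div_const _).ennreal_ofReal
  set D : (Fin n → ℝ) → ℝ≥0∞ :=
    fun y => ∏ i, ENNReal.ofReal (f ((t - s) * m i) (y i - x i)) with hDdef
  have hDmeas : Measurable D := Finset.measurable_prod _ fun i _ =>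
    ((hf_meas _ (mul_pos hts (hm i))).comp ((measurable_pi_apply i).sub_const _)).ennreal_ofReal
  have hsum_meas : Measurable fun y : Fin n → ℝ => ∑ i, y i :=
    Finset.measurable_sum _ fun i _ => measurable_pi_apply i
  rw [hP s t x hs hst ht1]
  have hdens : (fun y : Fin n → ℝ =>
        ENNReal.ofReal (Θ t (∑ i, y i) / Θ s (∑ i, x i) *
          ∏ i, f ((t - s) * m i) (y i - x i)))
      = D * fun y => G (∑ i, y i) := by
    funext y
    rw [Pi.mul_apply, ENNReal.ofReal_mul (div_nonneg (hΘpos t _ ht0 ht1).le hCpos.le),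
      hDdef, hGdef,
      ENNReal.ofReal_prod_of_nonneg (fun i _ => hf_nonneg _ _ (mul_pos hts (hm i))), mul_comm]
  have hGs : Measurable fun y : Fin n → ℝ => G (∑ i, y i) := hG.comp hsum_meas
  rw [hdens, withDensity_mul volume hDmeas hGs,
    aux_map_withDensity_comp (volume.withDensity D) hsum_meas hG,
    aux_key f hf_meas hf_nonneg hf_prob hconv n hn (fun i => (t - s) * m i)
      (fun i => mul_pos hts (hm i)) x]
  have hsum_m : ∑ i, (t - s) * m i = (t - s) * ∑ i, m i := (Finset.mul_sum _ _ _).symm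
  rw [hsum_m]
  have hk2 : Measurable fun r : ℝ => ENNReal.ofReal (f ((t - s) * ∑ i, m i) (r - ∑ i, x i)) :=
    ((hf_meas _ (mul_pos hts hMpos)).comp (measurable_id.sub_const _)).ennreal_ofReal
  rw [← withDensity_mul volume hk2 hG]
  congr 1
  funext r
  rw [Pi.mul_apply, hGdef,
    ← ENNReal.ofReal_mul (hf_nonneg _ _ (mul_pos hts hMpos)), mul_comm]
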